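/- (Mscm, ⊗, I) is a symmetric monoidal category: the category Mscm with tensor product given on objects by componentwise disjoint union of port types, on morphisms by block-diagonal stacking of the component matrices (reindexed along the canonical sum-type bijections), with monoidal unit I = (∅, ∅) the object whose input and output port types are empty, admits a symmetric monoidal category structure, with associator, left and right unitors, and braiding given by the morphisms induced by the canonical bijections of sum types (associativity (A ⊕ B) ⊕ C ≃ A ⊕ (B ⊕ C), unit laws ∅ ⊕ A ≃ A ≃ A ⊕ ∅, commutativity A ⊕ B ≃ B ⊕ A), satisfying the pentagon, triangle, hexagon, and braiding-involutivity axioms. -/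

import Mathlib

/-!
Mscm morphisms over the language semiring `K = Language σ`.

A morphism from `X = (Xin, Xout)` to `Y = (Yin, Yout)` is a pair of matrices
`(Min : Matrix Xin (Yin ⊕ Xout) K, Mout : Matrix Yout Xout K)`.
The identity on `X` is `(Matrix.fromColumns 1 0, 1)` (the block row `[1 | 0]`).
-/

/-- The auxiliary matrix `N'_out` of the composition formula: the block matrix of type
`Matrix ((Zin ⊕ Yout) ⊕ Xout) (Zin ⊕ Xout) K` whose `(Zin, Zin)` block is the identity,
whose `(Yout, Xout)` block is `Nout`, whose `(Xout, Xout)` block is the identity, and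
whose remaining blocks are zero. -/
def mscmNout' {σ : Type} {Zin Yout Xout : Type} [DecidableEq Zin] [DecidableEq Xout]
    (Nout : Matrix Yout Xout (Language σ)) :
    Matrix ((Zin ⊕ Yout) ⊕ Xout) (Zin ⊕ Xout) (Language σ) :=
  Matrix.of fun r c =>
    match r, c with
    | Sum.inl (Sum.inl z), Sum.inl z' => (1 : Matrix Zin Zin (Language σ)) z z'
    | Sum.inl (Sum.inr y), Sum.inr x => Nout y x
    | Sum.inr x, Sum.inr x' => (1 : Matrix Xout Xout (Language σ)) x x'
    | _, _ => 0

/-- The input-matrix component of the composite `m ∘ n` of Mscm-morphisms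
`n = (Nin, Nout) : X → Y` and `m = (Min, Mout) : Y → Z`, namely
`O_in = N_in * M'_in * N'_out` where `M'_in = fromBlocks Min 0 0 1`. -/
def mscmCompIn {σ : Type} {Xin Xout Yin Yout Zin : Type}
    [Fintype Yin] [Fintype Yout] [Fintype Xout] [Fintype Zin]
    [DecidableEq Zin] [DecidableEq Xout]
    (Nin : Matrix Xin (Yin ⊕ Xout) (Language σ))
    (Nout : Matrix Yout Xout (Language σ))
    (Min : Matrix Yin (Zin ⊕ Yout) (Language σ)) :
    Matrix Xin (Zin ⊕ Xout) (Language σ) :=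
  Nin * (Matrix.fromBlocks Min 0 0 1 : Matrix (Yin ⊕ Xout) ((Zin ⊕ Yout) ⊕ Xout) (Language σ)) *
    mscmNout' (Zin := Zin) Nout


open CategoryTheory

/-- The in-component of the tensor product of two Mscm-morphisms: the block-diagonal
matrix with blocks `M1in` and `M2in`, reindexed along the canonical bijection
`(Y1in ⊕ X1out) ⊕ (Y2in ⊕ X2out) ≃ (Y1in ⊕ Y2in) ⊕ (X1out ⊕ X2out)`. -/
def mscmTensorIn {σ : Type} {X1in X1out Y1in X2in X2out Y2in : Type}
    (M1in : Matrix X1in (Y1in ⊕ X1out) (Language σ))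
    (M2in : Matrix X2in (Y2in ⊕ X2out) (Language σ)) :
    Matrix (X1in ⊕ X2in) ((Y1in ⊕ Y2in) ⊕ (X1out ⊕ X2out)) (Language σ) :=
  (Matrix.fromBlocks M1in 0 0 M2in).submatrix id
    (Equiv.sumSumSumComm Y1in X1out Y2in X2out).symm

/-- An object of `Mscm`: a pair of finite types, the input and output ports of a box. -/
structure MscmObj (σ : Type) : Type 1 where
  inT : Type
  outT : Type
  [finIn : Fintype inT]
  [finOut : Fintype outT]
  [decIn : DecidableEq inT]
  [decOut : DecidableEq outT]

attribute [instance] MscmObj.finIn MscmObj.finOut MscmObj.decIn MscmObj.decOut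

/-- The category structure of `Mscm`: a morphism `X ⟶ Y` is a pair of matrices
`(Min : Matrix X.inT (Y.inT ⊕ X.outT) K, Mout : Matrix Y.outT X.outT K)`, the identity
is `(fromColumns 1 0, 1)`, and composition is the matrix composition formula. -/
instance mscmCategoryStruct (σ : Type) : CategoryStruct (MscmObj σ) where
  Hom X Y := Matrix X.inT (Y.inT ⊕ X.outT) (Language σ) × Matrix Y.outT X.outT (Language σ)
  id X := (Matrix.fromCols 1 0, 1)
  comp {X Y Z} n m := (mscmCompIn n.1 n.2 m.1, m.2 * n.2)

/-- The tensor product of objects: componentwise disjoint union (sum) of port types. -/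
def mscmTensorObj {σ : Type} (A B : MscmObj σ) : MscmObj σ :=
  MscmObj.mk (A.inT ⊕ B.inT) (A.outT ⊕ B.outT)

/-- The monoidal unit `I = (∅, ∅)`: the box with no input and no output ports. -/
def mscmUnit (σ : Type) : MscmObj σ := MscmObj.mk PEmpty PEmpty

/-- The tensor product of morphisms: block-diagonal stacking of the component
matrices, reindexed along the canonical sum-type bijections. -/
def mscmTensorHom {σ : Type} {X1 Y1 X2 Y2 : MscmObj σ} (f : X1 ⟶ Y1) (g : X2 ⟶ Y2) :
    mscmTensorObj X1 X2 ⟶ mscmTensorObj Y1 Y2 :=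
  (mscmTensorIn f.1 g.1, Matrix.fromBlocks f.2 0 0 g.2)

/-- The Mscm-morphism induced by bijections of input and output port types
(entrywise: a permutation-style 0/1 matrix on input ports, paired with zeros into the
domain's output ports, and a permutation-style 0/1 matrix on output ports). -/
def mscmIso {σ : Type} (X Y : MscmObj σ) (eIn : X.inT ≃ Y.inT) (eOut : X.outT ≃ Y.outT) :
    X ⟶ Y :=
  (Matrix.of fun x c =>
      Sum.elim (fun y => if eIn x = y then (1 : Language σ) else 0)
        (fun _ => (0 : Language σ)) c,
   Matrix.of fun y x => if eOut.symm y = x then (1 : Language σ) else 0)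

/-- The associator, induced by the canonical bijections `(A ⊕ B) ⊕ C ≃ A ⊕ (B ⊕ C)`. -/
def mscmAssoc {σ : Type} (A B C : MscmObj σ) :
    mscmTensorObj (mscmTensorObj A B) C ⟶ mscmTensorObj A (mscmTensorObj B C) :=
  mscmIso _ _ (Equiv.sumAssoc A.inT B.inT C.inT) (Equiv.sumAssoc A.outT B.outT C.outT)

/-- The left unitor, induced by the canonical bijections `∅ ⊕ A ≃ A`. -/
def mscmLeftUnitor {σ : Type} (A : MscmObj σ) : mscmTensorObj (mscmUnit σ) A ⟶ A :=
  mscmIso _ _ (Equiv.emptySum PEmpty A.inT) (Equiv.emptySum PEmpty A.outT)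

/-- The right unitor, induced by the canonical bijections `A ⊕ ∅ ≃ A`. -/
def mscmRightUnitor {σ : Type} (A : MscmObj σ) : mscmTensorObj A (mscmUnit σ) ⟶ A :=
  mscmIso _ _ (Equiv.sumEmpty A.inT PEmpty) (Equiv.sumEmpty A.outT PEmpty)

/-- The braiding, induced by the canonical bijections `A ⊕ B ≃ B ⊕ A`. -/
def mscmBraid {σ : Type} (A B : MscmObj σ) : mscmTensorObj A B ⟶ mscmTensorObj B A :=
  mscmIso _ _ (Equiv.sumComm A.inT B.inT) (Equiv.sumComm A.outT B.outT)

/-!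
Write a morphism `X ⟶ Y` in block form `([A | B], C)`, with `A` indexed by `X.inT × Y.inT`,
`B` by `X.inT × X.outT` and `C` by `Y.outT × X.outT`. Multiplying out the block matrices of the
composition formula gives `([A | B], C) ≫ ([A' | B'], C') = ([A A' | A B' C + B], C' C)`, from
which the category laws are matrix algebra. The associator, unitors and braiding are all of the
form `([P e | 0], P f⁻¹)` for permutation matrices `P` of bijections `e`, `f`, and on such
morphisms composition and tensor product act by composing and summing the bijections. So the
coherence axioms reduce to the corresponding identities between the canonical bijections of
sum types, which hold pointwise.
-/

namespace Equiv

variable {α β γ δ : Type*}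

theorem sumAssoc_pentagon :
    ((sumAssoc α β γ).sumCongr (Equiv.refl δ)).trans
        ((sumAssoc α (β ⊕ γ) δ).trans ((Equiv.refl α).sumCongr (sumAssoc β γ δ))) =
      (sumAssoc (α ⊕ β) γ δ).trans (sumAssoc α β (γ ⊕ δ)) := by
  ext (((a | b) | c) | d) <;> rfl

theorem sumAssoc_trans_sumCongr_emptySum (ε : Type*) [IsEmpty ε] :
    (sumAssoc α ε β).trans ((Equiv.refl α).sumCongr (emptySum ε β)) =
      (sumEmpty α ε).sumCongr (Equiv.refl β) := by
  ext ((a | e) | b)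
  · rfl
  · exact isEmptyElim e
  · rfl

theorem sumAssoc_hexagon :
    (sumAssoc α β γ).trans ((sumComm α (β ⊕ γ)).trans (sumAssoc β γ α)) =
      ((sumComm α β).sumCongr (Equiv.refl γ)).trans
        ((sumAssoc β α γ).trans ((Equiv.refl β).sumCongr (sumComm α γ))) := by
  ext ((a | b) | c) <;> rfl

theorem sumComm_trans_sumComm : (sumComm α β).trans (sumComm β α) = Equiv.refl (α ⊕ β) := by
  ext (a | b) <;> rfl

end Equiv

theorem Matrix.fromBlocks_toMatrix_toPEquiv {l m n o R : Type*} [DecidableEq m] [DecidableEq o]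
    [Zero R] [One R] (e : l ≃ m) (f : n ≃ o) :
    fromBlocks (e.toPEquiv.toMatrix : Matrix l m R) 0 0 f.toPEquiv.toMatrix =
      (e.sumCongr f).toPEquiv.toMatrix := by
  ext (i | i) (j | j) <;> simp

open Matrix

theorem mscmNout'_eq_fromBlocks {σ Zin Yout Xout : Type} [DecidableEq Zin] [DecidableEq Xout]
    (N : Matrix Yout Xout (Language σ)) :
    mscmNout' (Zin := Zin) N = fromBlocks (fromRows 1 0) (fromRows 0 N) 0 1 := by
  ext ((z | y) | x) (z' | x') <;> simp [mscmNout']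

section Hom

variable {σ : Type} {X Y Z W : MscmObj σ}

def mscmHomMk (A : Matrix X.inT Y.inT (Language σ)) (B : Matrix X.inT X.outT (Language σ))
    (C : Matrix Y.outT X.outT (Language σ)) : X ⟶ Y :=
  (fromCols A B, C)

theorem mscmHomMk_comp (A : Matrix X.inT Y.inT (Language σ))
    (B : Matrix X.inT X.outT (Language σ)) (C : Matrix Y.outT X.outT (Language σ))
    (A' : Matrix Y.inT Z.inT (Language σ)) (B' : Matrix Y.inT Y.outT (Language σ))
    (C' : Matrix Z.outT Y.outT (Language σ)) :
    mscmHomMk A B C ≫ mscmHomMk A' B' C' = mscmHomMk (A * A') (A * B' * C + B) (C' * C) := by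
  refine Prod.ext ?_ rfl
  change mscmCompIn (fromCols A B) C (fromCols A' B') = fromCols (A * A') (A * B' * C + B)
  simp only [mscmCompIn, mscmNout'_eq_fromBlocks, fromCols_mul_fromBlocks, fromCols_mul_fromRows,
    Matrix.mul_zero, Matrix.mul_one, add_zero, zero_add, Matrix.mul_assoc]

theorem mscmHomMk_toCols (f : X ⟶ Y) : mscmHomMk f.1.toCols₁ f.1.toCols₂ f.2 = f :=
  Prod.ext (fromCols_toCols f.1) rfl

theorem mscm_id_eq_homMk (X : MscmObj σ) : 𝟙 X = mscmHomMk 1 0 1 := rfl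

theorem mscm_id_comp (f : X ⟶ Y) : 𝟙 X ≫ f = f := by
  rw [← mscmHomMk_toCols f, mscm_id_eq_homMk, mscmHomMk_comp]
  simp only [Matrix.one_mul, Matrix.mul_one, add_zero]

theorem mscm_comp_id (f : X ⟶ Y) : f ≫ 𝟙 Y = f := by
  rw [← mscmHomMk_toCols f, mscm_id_eq_homMk, mscmHomMk_comp]
  simp only [Matrix.mul_one, Matrix.mul_zero, Matrix.zero_mul, Matrix.one_mul, zero_add]

theorem mscm_comp_assoc (f : W ⟶ X) (g : X ⟶ Y) (h : Y ⟶ Z) :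
    (f ≫ g) ≫ h = f ≫ g ≫ h := by
  rw [← mscmHomMk_toCols f, ← mscmHomMk_toCols g, ← mscmHomMk_toCols h]
  simp only [mscmHomMk_comp, Matrix.mul_add, Matrix.add_mul, Matrix.mul_assoc, add_assoc]

end Hom

section Tensor

variable {σ : Type} {X1 Y1 X2 Y2 : MscmObj σ}

theorem mscmTensorHom_homMk (A1 : Matrix X1.inT Y1.inT (Language σ))
    (B1 : Matrix X1.inT X1.outT (Language σ)) (C1 : Matrix Y1.outT X1.outT (Language σ))
    (A2 : Matrix X2.inT Y2.inT (Language σ)) (B2 : Matrix X2.inT X2.outT (Language σ))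
    (C2 : Matrix Y2.outT X2.outT (Language σ)) :
    mscmTensorHom (mscmHomMk A1 B1 C1) (mscmHomMk A2 B2 C2) =
      mscmHomMk (X := mscmTensorObj X1 X2) (Y := mscmTensorObj Y1 Y2)
        (fromBlocks A1 0 0 A2) (fromBlocks B1 0 0 B2) (fromBlocks C1 0 0 C2) := by
  refine Prod.ext ?_ rfl
  ext (i | i) ((j | j) | (j | j)) <;> rfl

end Tensor

section Iso

variable {σ : Type} {X Y Z W : MscmObj σ}

theorem mscmIso_eq_homMk (eIn : X.inT ≃ Y.inT) (eOut : X.outT ≃ Y.outT) :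
    mscmIso X Y eIn eOut =
      mscmHomMk eIn.toPEquiv.toMatrix 0 eOut.symm.toPEquiv.toMatrix := by
  refine Prod.ext ?_ ?_
  · ext i (j | j) <;> simp [mscmIso, mscmHomMk]
  · ext i j; simp [mscmIso, mscmHomMk]

theorem mscmIso_refl (X : MscmObj σ) : mscmIso X X (Equiv.refl _) (Equiv.refl _) = 𝟙 X := by
  simp only [mscmIso_eq_homMk, Equiv.refl_symm, Equiv.toPEquiv_refl, PEquiv.toMatrix_refl,
    mscm_id_eq_homMk]

theorem mscmIso_comp (eIn : X.inT ≃ Y.inT) (eOut : X.outT ≃ Y.outT)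
    (fIn : Y.inT ≃ Z.inT) (fOut : Y.outT ≃ Z.outT) :
    mscmIso X Y eIn eOut ≫ mscmIso Y Z fIn fOut =
      mscmIso X Z (eIn.trans fIn) (eOut.trans fOut) := by
  simp only [mscmIso_eq_homMk, mscmHomMk_comp, Matrix.mul_zero, Matrix.zero_mul, add_zero,
    Equiv.symm_trans, Equiv.toPEquiv_trans, PEquiv.toMatrix_trans]

theorem mscmTensorHom_mscmIso {X1 Y1 X2 Y2 : MscmObj σ}
    (e1 : X1.inT ≃ Y1.inT) (f1 : X1.outT ≃ Y1.outT)
    (e2 : X2.inT ≃ Y2.inT) (f2 : X2.outT ≃ Y2.outT) :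
    mscmTensorHom (mscmIso X1 Y1 e1 f1) (mscmIso X2 Y2 e2 f2) =
      mscmIso (mscmTensorObj X1 X2) (mscmTensorObj Y1 Y2) (e1.sumCongr e2) (f1.sumCongr f2) := by
  rw [mscmIso_eq_homMk, mscmIso_eq_homMk, mscmTensorHom_homMk, fromBlocks_zero,
    fromBlocks_toMatrix_toPEquiv, fromBlocks_toMatrix_toPEquiv, ← Equiv.sumCongr_symm]
  exact (mscmIso_eq_homMk _ _).symm

theorem mscmIso_comp_comp (eIn : X.inT ≃ Y.inT) (eOut : X.outT ≃ Y.outT)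
    (fIn : Y.inT ≃ Z.inT) (fOut : Y.outT ≃ Z.outT) (gIn : Z.inT ≃ W.inT)
    (gOut : Z.outT ≃ W.outT) :
    mscmIso X Y eIn eOut ≫ mscmIso Y Z fIn fOut ≫ mscmIso Z W gIn gOut =
      mscmIso X W (eIn.trans (fIn.trans gIn)) (eOut.trans (fOut.trans gOut)) := by
  rw [mscmIso_comp, mscmIso_comp]

end Iso

/-- **(Mscm, ⊗, I) is a symmetric monoidal category**: `Mscm` is a category (identity
and associativity laws hold), and the tensor product (disjoint union of port types and
block-diagonal stacking of matrices) with unit `I = (∅, ∅)` and with associator,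
unitors and braiding induced by the canonical sum-type bijections satisfies the
pentagon, triangle, hexagon, and braiding-involutivity axioms. -/
theorem mscm_symmetric_monoidal (σ : Type) :
    -- Mscm is a category
    (∀ (X Y : MscmObj σ) (f : X ⟶ Y), 𝟙 X ≫ f = f) ∧
    (∀ (X Y : MscmObj σ) (f : X ⟶ Y), f ≫ 𝟙 Y = f) ∧
    (∀ (W X Y Z : MscmObj σ) (f : W ⟶ X) (g : X ⟶ Y) (h : Y ⟶ Z),
        (f ≫ g) ≫ h = f ≫ (g ≫ h)) ∧
    -- pentagon axiom
    (∀ A B C D : MscmObj σ,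
        mscmTensorHom (mscmAssoc A B C) (𝟙 D) ≫ mscmAssoc A (mscmTensorObj B C) D ≫
            mscmTensorHom (𝟙 A) (mscmAssoc B C D)
          = mscmAssoc (mscmTensorObj A B) C D ≫ mscmAssoc A B (mscmTensorObj C D)) ∧
    -- triangle axiom
    (∀ A B : MscmObj σ,
        mscmAssoc A (mscmUnit σ) B ≫ mscmTensorHom (𝟙 A) (mscmLeftUnitor B)
          = mscmTensorHom (mscmRightUnitor A) (𝟙 B)) ∧
    -- hexagon axiom
    (∀ A B C : MscmObj σ,
        mscmAssoc A B C ≫ mscmBraid A (mscmTensorObj B C) ≫ mscmAssoc B C A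
          = mscmTensorHom (mscmBraid A B) (𝟙 C) ≫ mscmAssoc B A C ≫
              mscmTensorHom (𝟙 B) (mscmBraid A C)) ∧
    -- the braiding is involutive
    (∀ A B : MscmObj σ, mscmBraid A B ≫ mscmBraid B A = 𝟙 (mscmTensorObj A B)) := by
  refine ⟨fun _ _ => mscm_id_comp, fun _ _ => mscm_comp_id, fun _ _ _ _ => mscm_comp_assoc,
    fun A B C D => ?_, fun A B => ?_, fun A B C => ?_, fun A B => ?_⟩
  -- `erw`: the bijections in the structural morphisms have types like `A.inT ⊕ B.inT ≃ _`,
  -- which match `(mscmTensorObj A B).inT ≃ _` only after unfolding `mscmTensorObj`.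
  · rw [← mscmIso_refl A, ← mscmIso_refl D]
    unfold mscmAssoc
    erw [mscmTensorHom_mscmIso, mscmTensorHom_mscmIso, mscmIso_comp_comp, mscmIso_comp]
    congr 1 <;> exact Equiv.sumAssoc_pentagon
  · rw [← mscmIso_refl A, ← mscmIso_refl B]
    unfold mscmAssoc mscmLeftUnitor mscmRightUnitor
    erw [mscmTensorHom_mscmIso, mscmTensorHom_mscmIso, mscmIso_comp]
    congr 1 <;> exact Equiv.sumAssoc_trans_sumCongr_emptySum PEmpty
  · rw [← mscmIso_refl B, ← mscmIso_refl C]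
    unfold mscmAssoc mscmBraid
    erw [mscmTensorHom_mscmIso, mscmTensorHom_mscmIso, mscmIso_comp_comp, mscmIso_comp_comp]
    congr 1 <;> exact Equiv.sumAssoc_hexagon
  · unfold mscmBraid
    erw [mscmIso_comp, ← mscmIso_refl]
    congr 1 <;> exact Equiv.sumComm_trans_sumComm
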